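/- arXiv:2104.05249 — 4 statements merged into one kernel-verified Lean document; each statement's English description precedes it below -/
import Mathlib

section
/- Let a W-model be playable. Let a ∈ A be an agent, let (ℤ, 𝓩) be a measurable space whose σ-field 𝓩 contains all singletons, and let Z : H → ℤ be measurable from 𝓘_a to 𝓩. Then for any two pure W-strategy profiles λ = (λ_b)_{b∈A} and λ' = (λ'_b)_{b∈A} such that λ_b = λ'_b for every b ≠ a, one has Z ∘ S_λ = Z ∘ S_{λ'} (as maps Ω → ℤ). -/
open MeasureTheory

namespace WG

variable {A Ω : Type*} {U : A → Type*}

/-- The configuration (hybrid) space of a W-model. -/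
abbrev Config (U : A → Type*) (Ω : Type*) := (∀ a, U a) × Ω

section Core

variable [MeasurableSpace Ω] [∀ a, MeasurableSpace (U a)]

/-- A pure W-strategy profile: each agent's strategy is measurable w.r.t. his
information field. -/
def IsPureProfile (Ifld : A → MeasurableSpace (Config U Ω))
    (lam : ∀ a : A, Config U Ω → U a) : Prop :=
  ∀ a, @Measurable _ _ (Ifld a) _ (lam a)

/-- `u` solves the closed-loop equations for profile `lam` and state of Nature `ω`. -/
def IsSolution (lam : ∀ a : A, Config U Ω → U a) (ω : Ω) (u : ∀ a, U a) : Prop :=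
  ∀ a, u a = lam a (u, ω)

/-- Playability: unique solution of the closed-loop equations for every pure
W-strategy profile and every state of Nature. -/
def Playable (Ifld : A → MeasurableSpace (Config U Ω)) : Prop :=
  ∀ lam, IsPureProfile Ifld lam → ∀ ω : Ω, ∃! u, IsSolution lam ω u

/-- The solution map `S_λ` of a playable W-model. -/
noncomputable def solMap {Ifld : A → MeasurableSpace (Config U Ω)} (hP : Playable Ifld)
    {lam : ∀ a : A, Config U Ω → U a} (hlam : IsPureProfile Ifld lam) (ω : Ω) :
    Config U Ω :=
  ((hP lam hlam ω).exists.choose, ω)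

/-- The profile `(u_B, λ_{-B})`: constant actions `uB` on `B`, components of `lam` off `B`. -/
noncomputable def substProfile (B : Set A) (uB : ∀ a : A, U a)
    (lam : ∀ a : A, Config U Ω → U a) : ∀ a : A, Config U Ω → U a := fun a =>
  haveI := Classical.dec (a ∈ B)
  if a ∈ B then (fun _ => uB a) else lam a

theorem substProfile_isPure {Ifld : A → MeasurableSpace (Config U Ω)}
    {lam : ∀ a : A, Config U Ω → U a} (hlam : IsPureProfile Ifld lam)
    (B : Set A) (uB : ∀ a : A, U a) :
    IsPureProfile Ifld (substProfile B uB lam) := by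
  intro a
  by_cases h : a ∈ B
  · simpa [substProfile, h] using (measurable_const : @Measurable _ _ (Ifld a) _ fun _ => uB a)
  · simpa [substProfile, h] using hlam a

/-- The cylinder σ-field on the configuration space generated by the action
coordinate of agent `a`. -/
def actionCyl (a : A) : MeasurableSpace (Config U Ω) :=
  MeasurableSpace.comap (fun h : Config U Ω => h.1 a) inferInstance

/-- The cylinder σ-field on the configuration space generated by Nature's coordinate. -/
def natureCyl : MeasurableSpace (Config U Ω) :=
  MeasurableSpace.comap (fun h : Config U Ω => h.2) inferInstance

end Core

section Orderings

/-- `κ` is a total ordering of the agents of `Ap` (encoded as a duplicate-free list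
enumerating exactly `Ap`). -/
def IsTotalOrderingOf (Ap : Finset A) (κ : List A) : Prop :=
  κ.Nodup ∧ ∀ a, a ∈ κ ↔ a ∈ Ap

/-- A `p`-configuration-ordering: a map from configurations to total orderings of `Ap`. -/
def ConfigOrdering (Ap : Finset A) (φ : Config U Ω → List A) : Prop :=
  ∀ h, IsTotalOrderingOf Ap (φ h)

/-- The set `H_κ^φ` of configurations whose ordering starts with `κ`. -/
def ordEvent (φ : Config U Ω → List A) (κ : List A) : Set (Config U Ω) :=
  {h | (φ h).take κ.length = κ}

variable [MeasurableSpace Ω] [∀ a, MeasurableSpace (U a)]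

/-- Perfect recall of the player with agents `Ap` w.r.t. the configuration-ordering `φ`.
An ordering `κ ∈ Σ^p` is encoded as `κ₁ ++ [a]` with `first(κ) = κ₁`, `last(κ) = a`. -/
def PerfectRecall (Ifld : A → MeasurableSpace (Config U Ω)) (Ap : Finset A)
    (φ : Config U Ω → List A) : Prop :=
  ∀ (κ₁ : List A) (a : A), (κ₁ ++ [a]).Nodup → (∀ b ∈ κ₁ ++ [a], b ∈ Ap) →
    ∀ s : Set (Config U Ω),
      MeasurableSet[⨆ b ∈ κ₁, (actionCyl (U := U) (Ω := Ω) b ⊔ Ifld b)] s →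
      MeasurableSet[Ifld a] (ordEvent φ (κ₁ ++ [a]) ∩ s)

/-- The σ-field `𝓗^p_B`: generated by Nature, the actions of agents in `B`, and the
actions of the agents not belonging to player `p`. -/
def subHistField (Ap : Finset A) (B : Set A) : MeasurableSpace (Config U Ω) :=
  natureCyl ⊔ (⨆ b ∈ B, actionCyl b) ⊔ (⨆ c ∈ ((Ap : Set A))ᶜ, actionCyl c)

/-- Partial causality of the player with agents `Ap` w.r.t. `φ`. -/
def PartialCausality (Ifld : A → MeasurableSpace (Config U Ω)) (Ap : Finset A)
    (φ : Config U Ω → List A) : Prop :=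
  ∀ (κ₁ : List A) (a : A), (κ₁ ++ [a]).Nodup → (∀ b ∈ κ₁ ++ [a], b ∈ Ap) →
    ∀ s : Set (Config U Ω), MeasurableSet[Ifld a] s →
      MeasurableSet[subHistField (U := U) (Ω := Ω) Ap {b | b ∈ κ₁}] (ordEvent φ (κ₁ ++ [a]) ∩ s)

end Orderings

section Mixed

variable [MeasurableSpace Ω] [∀ a, MeasurableSpace (U a)]

/-- The σ-field on the randomization space `𝕎 = A → ℝ` generated by the coordinates in `s`. -/
def coordField (s : Set A) : MeasurableSpace (A → ℝ) :=
  ⨆ a ∈ s, MeasurableSpace.comap (fun w => w a) inferInstance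

variable {P : Type*}

/-- An A-mixed strategy profile (all players at once, `pl` assigning each agent to his
player): the action of agent `a` may depend measurably on the randomization coordinates
of the agents of his player and on his information. -/
def IsMixedProfile (Ifld : A → MeasurableSpace (Config U Ω)) (pl : A → P)
    (m : ∀ a : A, (A → ℝ) × Config U Ω → U a) : Prop :=
  ∀ a, @Measurable _ _ ((coordField {b | pl b = pl a}).prod (Ifld a)) _ (m a)

theorem isPureProfile_section {Ifld : A → MeasurableSpace (Config U Ω)} {pl : A → P}
    {m : ∀ a : A, (A → ℝ) × Config U Ω → U a} (hm : IsMixedProfile Ifld pl m)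
    (w : A → ℝ) : IsPureProfile Ifld (fun a h => m a (w, h)) := fun a =>
  (hm a).comp (@measurable_prodMk_left _ _ (coordField {b | pl b = pl a}) (Ifld a) w)

/-- The map `T_m : (ω, w) ↦ S_{m(w, ·)}(ω)`. -/
noncomputable def mixedSol {Ifld : A → MeasurableSpace (Config U Ω)} (hP : Playable Ifld)
    {pl : A → P} {m : ∀ a : A, (A → ℝ) × Config U Ω → U a}
    (hm : IsMixedProfile Ifld pl m) (x : Ω × (A → ℝ)) : Config U Ω :=
  solMap hP (isPureProfile_section hm x.2) x.1

/-- An A-behavioral strategy of the player with agents `Ap`: agent `a`'s action depends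
(measurably) only on his own randomization coordinate and his information. -/
def IsBehavioralOn (Ifld : A → MeasurableSpace (Config U Ω)) (Ap : Finset A)
    (mB : ∀ a : A, ℝ → Config U Ω → U a) : Prop :=
  ∀ a ∈ Ap, @Measurable (ℝ × Config U Ω) (U a)
    (MeasurableSpace.prod inferInstance (Ifld a)) _ (fun q => mB a q.1 q.2)

/-- Replace, in the profile `m`, the components of the agents of `Ap` by the
behavioral strategy `mB`. -/
noncomputable def combineProfile (Ap : Finset A)
    (mB : ∀ a : A, ℝ → Config U Ω → U a)
    (m : ∀ a : A, (A → ℝ) × Config U Ω → U a) :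
    ∀ a : A, (A → ℝ) × Config U Ω → U a := fun a x =>
  haveI := Classical.dec (a ∈ Ap)
  if a ∈ Ap then mB a (x.1 a) x.2 else m a x

/-- `ℓW` is the product of copies of `μ₀` (marginal characterization on finite cylinders). -/
def IsProductOf (μ₀ : Measure ℝ) (ℓW : Measure (A → ℝ)) : Prop :=
  ∀ (s : Finset A) (E : A → Set ℝ), (∀ a ∈ s, MeasurableSet (E a)) →
    ℓW {w | ∀ a ∈ s, w a ∈ E a} = ∏ a ∈ s, μ₀ (E a)

/-- `p`-strong measurability: joint measurability of all partial solution maps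
`Ŝ^B_{λ_{-B}}` for `B ⊆ A^p`. -/
def PStronglyMeasurable {Ifld : A → MeasurableSpace (Config U Ω)} (hP : Playable Ifld)
    (Ap : Finset A) : Prop :=
  ∀ (B : Set A), B ⊆ (Ap : Set A) →
    ∀ (lam : ∀ a : A, Config U Ω → U a) (hlam : IsPureProfile Ifld lam),
      @Measurable (Ω × (∀ a, U a)) (Config U Ω)
        (MeasurableSpace.prod inferInstance
          (⨆ b ∈ B, MeasurableSpace.comap (fun u : ∀ a, U a => u b) inferInstance))
        inferInstance
        (fun x => solMap hP (substProfile_isPure hlam B x.2) x.1)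

/-- The uniform (Lebesgue) probability on `[0,1] ⊆ ℝ`. -/
noncomputable def unif : Measure ℝ := volume.restrict (Set.Icc (0 : ℝ) 1)

end Mixed

section Kernels

/-- Product of the action spaces of the agents enumerated by the list `l`. -/
abbrev SubProd (U : A → Type*) (l : List A) := ∀ b : {x // x ∈ l}, U b.val

/-- Glue a `κ₁`-indexed family of actions with an action of the last agent `a`. -/
noncomputable def extendProd {U : A → Type*} (κ₁ : List A) (a : A)
    (u : SubProd U κ₁) (x : U a) : SubProd U (κ₁ ++ [a]) := fun b =>
  haveI := Classical.dec (b.val ∈ κ₁)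
  if hb : b.val ∈ κ₁ then u ⟨b.val, hb⟩
  else
    have hba : b.val = a := by
      rcases List.mem_append.mp b.2 with h | h
      · exact absurd h hb
      · simpa using h
    cast (congrArg U hba).symm x

/-- `η` is a regular conditional distribution of `μ` given the random variable `X`. -/
def IsRCD {α β : Type*} [MeasurableSpace α] [MeasurableSpace β]
    (μ : Measure α) (X : α → β) (η : β → Measure α) : Prop :=
  (∀ z, IsProbabilityMeasure (η z)) ∧
  (∀ ⦃E : Set α⦄, MeasurableSet E → Measurable fun z => η z E) ∧
  (∀ ⦃E : Set α⦄, MeasurableSet E → ∀ ⦃C : Set β⦄, MeasurableSet C →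
    μ (E ∩ X ⁻¹' C) = ∫⁻ z in C, η z E ∂(Measure.map X μ))

/-- Merge randomizations: coordinates in `Ap` taken from `wp`, the others from `wmp`. -/
noncomputable def merge (Ap : Finset A) (wp : ↥Ap → ℝ) (wmp : A → ℝ) : A → ℝ := fun a =>
  haveI := Classical.dec (a ∈ Ap)
  if h : a ∈ Ap then wp ⟨a, h⟩ else wmp a

end Kernels

end WG


/-!
If the two solutions were told apart by an event `s` of `𝓘_a`, let agent `a` play `λ_a` on `s`
and `λ'_a` off `s`. Since `s ∈ 𝓘_a` this is again a pure W-strategy profile, and both solutions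
solve its closed-loop equations, so playability forces them to coincide.
-/

namespace WG

variable {A Ω : Type*} {U : A → Type*} {Ifld : A → MeasurableSpace (Config U Ω)}
  {lam lam' : ∀ b : A, Config U Ω → U b}

theorem IsPureProfile.update [∀ a, MeasurableSpace (U a)] [DecidableEq A]
    (hlam : IsPureProfile Ifld lam) {a : A} {f : Config U Ω → U a}
    (hf : Measurable[Ifld a] f) : IsPureProfile Ifld (Function.update lam a f) := by
  intro b
  by_cases hb : b = a
  · subst hb
    simpa only [Function.update_self] using hf
  · simpa only [Function.update_of_ne hb] using hlam b

theorem isSolution_update_iff [DecidableEq A] {a : A} {f : Config U Ω → U a} {ω : Ω}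
    {u : ∀ b, U b} :
    IsSolution (Function.update lam a f) ω u ↔
      u a = f (u, ω) ∧ ∀ b, b ≠ a → u b = lam b (u, ω) := by
  constructor
  · intro hu
    refine ⟨by simpa only [Function.update_self] using hu a, fun b hb => ?_⟩
    simpa only [Function.update_of_ne hb] using hu b
  · rintro ⟨hua, hu⟩ b
    by_cases hb : b = a
    · subst hb
      simpa only [Function.update_self] using hua
    · simpa only [Function.update_of_ne hb] using hu b hb

theorem isSolution_solMap [∀ a, MeasurableSpace (U a)] (hP : Playable Ifld)
    (hlam : IsPureProfile Ifld lam) (ω : Ω) :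
    IsSolution lam ω (solMap hP hlam ω).1 :=
  (hP lam hlam ω).exists.choose_spec

theorem solMap_mem_of_agree [∀ a, MeasurableSpace (U a)] (hP : Playable Ifld)
    (hlam : IsPureProfile Ifld lam) (hlam' : IsPureProfile Ifld lam') {a : A}
    (hagree : ∀ b, b ≠ a → lam b = lam' b)
    {s : Set (Config U Ω)} (hs : MeasurableSet[Ifld a] s) {ω : Ω}
    (hmem : solMap hP hlam ω ∈ s) : solMap hP hlam' ω ∈ s := by
  classical
  by_contra hnot
  set u := (solMap hP hlam ω).1
  set u' := (solMap hP hlam' ω).1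
  set mix := Function.update lam a (s.piecewise (lam a) (lam' a))
  have hmix : IsPureProfile Ifld mix := hlam.update ((hlam a).piecewise hs (hlam' a))
  have hu : IsSolution mix ω u := by
    refine isSolution_update_iff.mpr ⟨?_, fun b _ => isSolution_solMap hP hlam ω b⟩
    rw [Set.piecewise_eq_of_mem _ _ _ (show (u, ω) ∈ s from hmem)]
    exact isSolution_solMap hP hlam ω a
  have hu' : IsSolution mix ω u' := by
    refine isSolution_update_iff.mpr ⟨?_, fun b hb => ?_⟩
    · rw [Set.piecewise_eq_of_notMem _ _ _ (show (u', ω) ∉ s from hnot)]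
      exact isSolution_solMap hP hlam' ω a
    · rw [hagree b hb]
      exact isSolution_solMap hP hlam' ω b
  have hsame : solMap hP hlam ω = solMap hP hlam' ω :=
    Prod.ext ((hP _ hmix ω).unique hu hu') rfl
  exact hnot (hsame ▸ hmem)

end WG

theorem statement2_general
    {A Ω : Type*} {U : A → Type*} [∀ a, MeasurableSpace (U a)]
    (Ifld : A → MeasurableSpace (WG.Config U Ω))
    (hP : WG.Playable Ifld)
    (a : A) {Zt : Type*} [MeasurableSpace Zt] [MeasurableSingletonClass Zt]
    (Z : WG.Config U Ω → Zt) (hZ : @Measurable _ _ (Ifld a) _ Z)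
    (lam lam' : ∀ b : A, WG.Config U Ω → U b)
    (hlam : WG.IsPureProfile Ifld lam) (hlam' : WG.IsPureProfile Ifld lam')
    (hagree : ∀ b, b ≠ a → lam b = lam' b) :
    (fun ω => Z (WG.solMap hP hlam ω)) = fun ω => Z (WG.solMap hP hlam' ω) := by
  funext ω
  have hlevel : WG.solMap hP hlam' ω ∈ Z ⁻¹' {Z (WG.solMap hP hlam ω)} :=
    WG.solMap_mem_of_agree hP hlam hlam' hagree (hZ (measurableSet_singleton _)) rfl
  exact hlevel.symm

/-- In a playable W-model, let `a` be an agent, `(ℤ, 𝓩)` a measurable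
space whose σ-field contains the singletons, and `Z : H → ℤ` measurable w.r.t. the
information field `𝓘_a` of agent `a`. Then for any two pure W-strategy profiles that
coincide off `a`, one has `Z ∘ S_λ = Z ∘ S_{λ'}`. -/
theorem statement2
    {A Ω : Type*} [MeasurableSpace Ω] {U : A → Type*} [∀ a, MeasurableSpace (U a)]
    (Ifld : A → MeasurableSpace (WG.Config U Ω))
    (hIle : ∀ a, Ifld a ≤ (inferInstance : MeasurableSpace (WG.Config U Ω)))
    (hP : WG.Playable Ifld)
    (a : A) {Zt : Type*} [MeasurableSpace Zt] [MeasurableSingletonClass Zt]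
    (Z : WG.Config U Ω → Zt) (hZ : @Measurable _ _ (Ifld a) _ Z)
    (lam lam' : ∀ b : A, WG.Config U Ω → U b)
    (hlam : WG.IsPureProfile Ifld lam) (hlam' : WG.IsPureProfile Ifld lam')
    (hagree : ∀ b, b ≠ a → lam b = lam' b) :
    (fun ω => Z (WG.solMap hP hlam ω)) = fun ω => Z (WG.solMap hP hlam' ω) :=
  statement2_general Ifld hP a Z hZ lam lam' hlam hlam' hagree
end

section
/- In a playable W-model, if a player p satisfies perfect recall with some p-configuration-ordering φ, then p satisfies partial causality with the same p-configuration-ordering φ. -/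
open MeasureTheory

/-! Playability forces every event in the information field of an agent to be invariant under
changes of that agent's own action. Under perfect recall, an event `T = H_κ ∩ I` with
`I ∈ 𝓘_{last κ}` is known to `last κ` and hence, on `H_κ`, to every agent of the player acting
later; so `T` is invariant under the actions of all agents of the player outside `first κ`.
Resetting those finitely many actions to fixed values does not move `T`, which exhibits `T` as
the preimage of a measurable set under a map measurable for `𝓗^p_{first κ}`. -/

theorem List.exists_eq_append_cons_prefix_of_mem {α : Type*} {κ L : List α} {c : α}
    (hκ : κ <+: L) (hc : c ∈ L) (hcκ : c ∉ κ) : ∃ m₁ m₂, L = m₁ ++ c :: m₂ ∧ κ <+: m₁ := by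
  obtain ⟨m₁, m₂, rfl⟩ := List.append_of_mem hc
  refine ⟨m₁, m₂, rfl, ?_⟩
  have hm₁c : m₁ ++ [c] <+: m₁ ++ c :: m₂ := ⟨m₂, by simp⟩
  rcases List.prefix_or_prefix_of_prefix hκ hm₁c with h | h
  · rcases List.prefix_concat_iff.mp h with rfl | h
    · simp at hcκ
    · exact h
  · exact absurd (h.subset (by simp)) hcκ

namespace WG

variable {A Ω : Type*} {U : A → Type*} [∀ a, MeasurableSpace (U a)]
  {Ifld : A → MeasurableSpace (Config U Ω)}

/-- Otherwise the strategy "`z` on `I`, `u c` off `I`" of `c`, with everybody else playing `u`,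
would leave the closed loop without a solution. -/
theorem update_mem_of_measurableSet_info [DecidableEq A] (hP : Playable Ifld) {c : A}
    {I : Set (Config U Ω)} (hI : MeasurableSet[Ifld c] I) {u : ∀ b, U b} {ω : Ω}
    (hu : (u, ω) ∈ I) (z : U c) : (Function.update u c z, ω) ∈ I := by
  classical
  by_contra hz
  let lam : ∀ b, Config U Ω → U b :=
    Function.update (fun b _ => u b) c (I.piecewise (fun _ => z) fun _ => u c)
  have hlam : IsPureProfile Ifld lam := by
    intro b
    by_cases hb : b = c
    · subst hb
      simpa [lam] using Measurable.piecewise hI measurable_const measurable_const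
    · simp [lam, hb]
  obtain ⟨v, hv, -⟩ := hP lam hlam ω
  have hv_eq : v = Function.update u c (if (v, ω) ∈ I then z else u c) := by
    funext b
    rw [hv b]
    by_cases hb : b = c
    · subst hb; simp [lam, Set.piecewise]
    · simp [lam, hb]
  split_ifs at hv_eq with hvI
  · exact hz (hv_eq ▸ hvI)
  · exact hvI (by rwa [hv_eq, Function.update_eq_self])

theorem PerfectRecall.measurableSet_ordEvent {Ap : Finset A} {φ : Config U Ω → List A}
    (hPR : PerfectRecall Ifld Ap φ) {κ₁ : List A} {a : A} (hnd : (κ₁ ++ [a]).Nodup)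
    (hmem : ∀ b ∈ κ₁ ++ [a], b ∈ Ap) : MeasurableSet[Ifld a] (ordEvent φ (κ₁ ++ [a])) := by
  simpa using hPR κ₁ a hnd hmem Set.univ MeasurableSet.univ

theorem PerfectRecall.update_mem [DecidableEq A] (hP : Playable Ifld) {Ap : Finset A}
    {φ : Config U Ω → List A} (hφ : ConfigOrdering Ap φ) (hPR : PerfectRecall Ifld Ap φ)
    {κ₁ : List A} {a : A} {T : Set (Config U Ω)} (hT : MeasurableSet[Ifld a] T)
    (hTκ : T ⊆ ordEvent φ (κ₁ ++ [a])) {c : A} (hc : c ∈ Ap) (hcκ₁ : c ∉ κ₁)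
    {u : ∀ b, U b} {ω : Ω} (hu : (u, ω) ∈ T) (z : U c) : (Function.update u c z, ω) ∈ T := by
  by_cases hca : c = a
  · subst hca
    exact update_mem_of_measurableSet_info hP hT hu z
  obtain ⟨hnd, hφmem⟩ := hφ (u, ω)
  have hκ : κ₁ ++ [a] <+: φ (u, ω) := hTκ hu ▸ List.take_prefix _ _
  obtain ⟨m₁, m₂, hφu, hκm₁⟩ :=
    List.exists_eq_append_cons_prefix_of_mem hκ ((hφmem c).mpr hc) (by simp [hcκ₁, hca])
  have hm₁c : m₁ ++ [c] <+: φ (u, ω) := ⟨m₂, by simp [hφu]⟩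
  have hT' : MeasurableSet[⨆ b ∈ m₁, actionCyl (U := U) (Ω := Ω) b ⊔ Ifld b] T :=
    (le_sup_right.trans (le_iSup₂ (f := fun b (_ : b ∈ m₁) => actionCyl b ⊔ Ifld b) a
      (hκm₁.subset (by simp)))) _ hT
  have hcT := hPR m₁ c (hnd.sublist hm₁c.sublist) (fun b hb => (hφmem b).mp (hm₁c.subset hb))
    T hT'
  have hu' : (u, ω) ∈ ordEvent φ (m₁ ++ [c]) ∩ T :=
    ⟨(List.prefix_iff_eq_take.mp hm₁c).symm, hu⟩
  exact (update_mem_of_measurableSet_info hP hcT hu' z).2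

theorem measurableSet_of_update_mem [MeasurableSpace Ω] [DecidableEq A] {C : Finset A}
    {T : Set (Config U Ω)} (hT : MeasurableSet T)
    (hinv : ∀ c ∈ C, ∀ u ω (z : U c), (u, ω) ∈ T → (Function.update u c z, ω) ∈ T) :
    MeasurableSet[natureCyl ⊔ ⨆ b ∈ (C : Set A)ᶜ, actionCyl b] T := by
  rcases isEmpty_or_nonempty (∀ b, U b) with hU | hU
  · simp [Set.eq_empty_of_isEmpty T]
  obtain ⟨v⟩ := hU
  have hinv_iff : ∀ c ∈ C, ∀ u ω (z : U c), (Function.update u c z, ω) ∈ T ↔ (u, ω) ∈ T :=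
    fun c hc u ω z => ⟨fun h => by simpa using hinv c hc _ ω (u c) h, hinv c hc u ω z⟩
  have hpiecewise : ∀ D ⊆ C, ∀ u ω, (D.piecewise v u, ω) ∈ T ↔ (u, ω) ∈ T := by
    intro D
    induction D using Finset.induction_on with
    | empty => simp
    | insert c D hcD ih =>
      intro hDC u ω
      rw [Finset.piecewise_insert, hinv_iff c (hDC (Finset.mem_insert_self c D))]
      exact ih ((Finset.subset_insert c D).trans hDC) u ω
  let j : Config U Ω → Config U Ω := fun h => (C.piecewise v h.1, h.2)
  have hj : Measurable[natureCyl ⊔ ⨆ b ∈ (C : Set A)ᶜ, actionCyl b] j := by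
    refine Measurable.prodMk (@measurable_pi_lambda _ _ _ (_) _ _ fun b => ?_) ?_
    · by_cases hb : b ∈ C
      · simp only [Finset.piecewise_eq_of_mem _ _ _ hb]
        exact measurable_const
      · simp only [Finset.piecewise_eq_of_notMem _ _ _ hb]
        exact (comap_measurable _).mono
          (le_sup_right.trans' (le_iSup₂ (f := fun b (_ : b ∈ (C : Set A)ᶜ) =>
            actionCyl (U := U) (Ω := Ω) b) b hb)) le_rfl
    · exact (comap_measurable _).mono le_sup_left le_rfl
  have hTj : j ⁻¹' T = T := Set.ext fun h => hpiecewise C le_rfl h.1 h.2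
  rw [← hTj]
  exact hj hT

theorem compl_filter_notMem_le_subHistField [MeasurableSpace Ω] [DecidableEq A]
    (Ap : Finset A) (κ₁ : List A) :
    natureCyl ⊔ ⨆ b ∈ ((Ap.filter (· ∉ κ₁) : Finset A) : Set A)ᶜ, actionCyl b ≤
      subHistField (U := U) (Ω := Ω) Ap {b | b ∈ κ₁} := by
  refine sup_le (le_sup_left.trans le_sup_left) (iSup₂_le fun b hb => ?_)
  simp only [Finset.coe_filter, Set.mem_compl_iff, Set.mem_ofPred_eq, not_and, not_not] at hb
  by_cases hbAp : b ∈ Ap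
  · exact (le_iSup₂ (f := fun b (_ : b ∈ {b | b ∈ κ₁}) => actionCyl (U := U) (Ω := Ω) b) b
      (hb hbAp)).trans (le_sup_right.trans le_sup_left)
  · exact (le_iSup₂ (f := fun b (_ : b ∈ ((Ap : Set A))ᶜ) => actionCyl (U := U) (Ω := Ω) b) b
      hbAp).trans le_sup_right

end WG

theorem statement4_general
    {A Ω : Type*} [MeasurableSpace Ω] {U : A → Type*} [∀ a, MeasurableSpace (U a)]
    (Ifld : A → MeasurableSpace (WG.Config U Ω))
    (hIle : ∀ a, Ifld a ≤ (inferInstance : MeasurableSpace (WG.Config U Ω)))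
    (hP : WG.Playable Ifld)
    (Ap : Finset A)
    (φ : WG.Config U Ω → List A) (hφ : WG.ConfigOrdering Ap φ)
    (hPR : WG.PerfectRecall Ifld Ap φ) :
    WG.PartialCausality Ifld Ap φ := by
  classical
  intro κ₁ a hnd hmem s hs
  have hT : MeasurableSet[Ifld a] (WG.ordEvent φ (κ₁ ++ [a]) ∩ s) :=
    (hPR.measurableSet_ordEvent hnd hmem).inter hs
  refine WG.compl_filter_notMem_le_subHistField Ap κ₁ _
    (WG.measurableSet_of_update_mem (hIle a _ hT) fun c hc u ω z hu => ?_)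
  obtain ⟨hcAp, hcκ₁⟩ := Finset.mem_filter.mp hc
  exact hPR.update_mem hP hφ hT Set.inter_subset_left hcAp hcκ₁ hu z

/-- In a playable W-model, if a player `p` (with agents `Ap`) satisfies
perfect recall with some `p`-configuration-ordering `φ`, then she satisfies partial
causality with the same `φ`. -/
theorem statement4
    {A Ω : Type*} [MeasurableSpace Ω] {U : A → Type*} [∀ a, MeasurableSpace (U a)]
    (Ifld : A → MeasurableSpace (WG.Config U Ω))
    (hIle : ∀ a, Ifld a ≤ (inferInstance : MeasurableSpace (WG.Config U Ω)))
    (hP : WG.Playable Ifld)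
    (Ap : Finset A) (hApne : Ap.Nonempty)
    (φ : WG.Config U Ω → List A) (hφ : WG.ConfigOrdering Ap φ)
    (hPR : WG.PerfectRecall Ifld Ap φ) :
    WG.PartialCausality Ifld Ap φ :=
  statement4_general Ifld hIle hP Ap φ hφ hPR
end

section
/- Support lemma for behavioral strategies. Consider a playable and measurable W-game whose agent set A is countable and in which 𝓕 and each 𝓤_a contain all singletons; fix a player p with A^p finite. Let ν be a probability on (Ω, 𝓕), m^{-p} an A-mixed strategy of the other players, m^p an A-mixed strategy of player p, and m'^p an A-behavioral strategy of player p. For a ∈ A^p and h ∈ H define 𝕎'_a[h] = {w_a ∈ [0,1] : m'^p_a(w_a, h) = h_a}. Then for every h ∈ H: if Q^ν_{(m^p, m^{-p})} = Q^ν_{(m'^p, m^{-p})} and Q^ν_{(m^p, m^{-p})}({h}) > 0, then ℓ_a(𝕎'_a[h]) > 0 for every a ∈ A^p. -/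
/-! On the event where the profile `(mB, m_{-p})` produces the configuration `h`, the
closed-loop equation of an agent `a` of player `p` reads `h_a = mB_a(w_a, h)`, i.e.
`w_a ∈ 𝕎'_a[h]`. Hence `Q({h}) ≤ ℓ_a(𝕎'_a[h])` for the law `Q` of that profile, which is
also the law of `m`. -/

open MeasureTheory

namespace WG

variable {A Ω : Type*} {U : A → Type*}

section Support

variable [MeasurableSpace Ω] [∀ a, MeasurableSpace (U a)] {P : Type*}
  {Ifld : A → MeasurableSpace (Config U Ω)} {pl : A → P}

theorem mixedSol_fst_apply (hP : Playable Ifld) {m : ∀ a : A, (A → ℝ) × Config U Ω → U a}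
    (hm : IsMixedProfile Ifld pl m) (x : Ω × (A → ℝ)) (a : A) :
    (mixedSol hP hm x).1 a = m a (x.2, mixedSol hP hm x) :=
  (hP _ (isPureProfile_section hm x.2) x.1).exists.choose_spec a

theorem combineProfile_apply_eq_of_mixedSol_eq (hP : Playable Ifld) {Ap : Finset A}
    {mB : ∀ a : A, ℝ → Config U Ω → U a} {m : ∀ a : A, (A → ℝ) × Config U Ω → U a}
    (hm' : IsMixedProfile Ifld pl (combineProfile Ap mB m)) {a : A} (ha : a ∈ Ap)
    {h : Config U Ω} {x : Ω × (A → ℝ)} (hx : mixedSol hP hm' x = h) :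
    mB a (x.2 a) h = h.1 a := by
  have hsol := mixedSol_fst_apply hP hm' x a
  rw [hx] at hsol
  simpa [combineProfile, ha] using hsol.symm

end Support

theorem IsBehavioralOn.measurable_apply [∀ a, MeasurableSpace (U a)]
    {Ifld : A → MeasurableSpace (Config U Ω)} {Ap : Finset A}
    {mB : ∀ a : A, ℝ → Config U Ω → U a} (hmB : IsBehavioralOn Ifld Ap mB) {a : A} (ha : a ∈ Ap)
    (h : Config U Ω) :
    Measurable fun r => mB a r h :=
  (hmB a ha).comp (@Measurable.prodMk ℝ _ ℝ (Config U Ω) _ (Ifld a) _ _ measurable_id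
    (@measurable_const _ _ (Ifld a) _ h))

theorem IsProductOf.apply_coord_preimage {μ₀ : Measure ℝ} {ℓW : Measure (A → ℝ)}
    (hℓW : IsProductOf μ₀ ℓW) (a : A) {E : Set ℝ} (hE : MeasurableSet E) :
    ℓW {w | w a ∈ E} = μ₀ E := by
  simpa using hℓW {a} (fun _ => E) (fun _ _ => hE)

end WG

theorem statement12_general
    {A Ω : Type*} [Countable A] [MeasurableSpace Ω] [MeasurableSingletonClass Ω]
    {U : A → Type*} [∀ a, MeasurableSpace (U a)] [∀ a, MeasurableSingletonClass (U a)]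
    {P : Type*} (pl : A → P)
    (Ifld : A → MeasurableSpace (WG.Config U Ω))
    (hP : WG.Playable Ifld)
    (Ap : Finset A)
    (ℓW : Measure (A → ℝ)) (hℓWprob : IsProbabilityMeasure ℓW)
    (hℓW : WG.IsProductOf WG.unif ℓW)
    (hT : ∀ (m' : ∀ a : A, (A → ℝ) × WG.Config U Ω → U a)
        (hm' : WG.IsMixedProfile Ifld pl m'), Measurable (WG.mixedSol hP hm'))
    (ν : Measure Ω) (hν : IsProbabilityMeasure ν)
    (m : ∀ a : A, (A → ℝ) × WG.Config U Ω → U a) (hm : WG.IsMixedProfile Ifld pl m)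
    (mB : ∀ a : A, ℝ → WG.Config U Ω → U a) (hmB : WG.IsBehavioralOn Ifld Ap mB)
    (hm' : WG.IsMixedProfile Ifld pl (WG.combineProfile Ap mB m))
    (h : WG.Config U Ω)
    (heq : Measure.map (WG.mixedSol hP hm) (ν.prod ℓW) =
      Measure.map (WG.mixedSol hP hm') (ν.prod ℓW))
    (hpos : 0 < Measure.map (WG.mixedSol hP hm) (ν.prod ℓW) {h}) :
    ∀ a ∈ Ap, 0 < WG.unif {r : ℝ | mB a r h = h.1 a} := by
  intro a ha
  have hS : MeasurableSet {r : ℝ | mB a r h = h.1 a} :=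
    hmB.measurable_apply ha h (measurableSet_singleton _)
  have hsub : WG.mixedSol hP hm' ⁻¹' {h} ⊆ Set.univ ×ˢ {w | w a ∈ {r | mB a r h = h.1 a}} :=
    fun x hx => ⟨trivial, WG.combineProfile_apply_eq_of_mixedSol_eq hP hm' ha hx⟩
  calc 0 < Measure.map (WG.mixedSol hP hm') (ν.prod ℓW) {h} := heq ▸ hpos
    _ = ν.prod ℓW (WG.mixedSol hP hm' ⁻¹' {h}) :=
      Measure.map_apply (hT _ hm') (measurableSet_singleton h)
    _ ≤ ν.prod ℓW (Set.univ ×ˢ {w | w a ∈ {r | mB a r h = h.1 a}}) := measure_mono hsub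
    _ = WG.unif {r : ℝ | mB a r h = h.1 a} := by
      rw [Measure.prod_prod, measure_univ, one_mul, hℓW.apply_coord_preimage a hS]

/-- **support lemma for behavioral strategies.** In a playable and
measurable W-game with countable agent set and all singletons measurable in Nature's
and the agents' action spaces, fix a player `p` with finitely many agents `Ap`, a
probability `ν`, an A-mixed strategy profile `m` and an A-behavioral strategy `mB` of
player `p`. If the pushforward probabilities of `m` and of `m` with `p`'s component
replaced by `mB` agree and give positive mass to a configuration `h`, then for each
agent `a` of `p`, the set `𝕎'_a[h] = {w_a ∈ [0,1] : mB_a(w_a, h) = h_a}` has positive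
Lebesgue measure. -/
theorem statement12
    {A Ω : Type*} [Countable A] [MeasurableSpace Ω] [MeasurableSingletonClass Ω]
    {U : A → Type*} [∀ a, MeasurableSpace (U a)] [∀ a, MeasurableSingletonClass (U a)]
    {P : Type*} (pl : A → P)
    (Ifld : A → MeasurableSpace (WG.Config U Ω))
    (hIle : ∀ a, Ifld a ≤ (inferInstance : MeasurableSpace (WG.Config U Ω)))
    (hP : WG.Playable Ifld)
    (p : P) (Ap : Finset A) (hAp : ∀ a, a ∈ Ap ↔ pl a = p) (hApne : Ap.Nonempty)
    (ℓW : Measure (A → ℝ)) (hℓWprob : IsProbabilityMeasure ℓW)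
    (hℓW : WG.IsProductOf WG.unif ℓW)
    (hT : ∀ (m' : ∀ a : A, (A → ℝ) × WG.Config U Ω → U a)
        (hm' : WG.IsMixedProfile Ifld pl m'), Measurable (WG.mixedSol hP hm'))
    (ν : Measure Ω) (hν : IsProbabilityMeasure ν)
    (m : ∀ a : A, (A → ℝ) × WG.Config U Ω → U a) (hm : WG.IsMixedProfile Ifld pl m)
    (mB : ∀ a : A, ℝ → WG.Config U Ω → U a) (hmB : WG.IsBehavioralOn Ifld Ap mB)
    (hm' : WG.IsMixedProfile Ifld pl (WG.combineProfile Ap mB m))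
    (h : WG.Config U Ω)
    (heq : Measure.map (WG.mixedSol hP hm) (ν.prod ℓW) =
      Measure.map (WG.mixedSol hP hm') (ν.prod ℓW))
    (hpos : 0 < Measure.map (WG.mixedSol hP hm) (ν.prod ℓW) {h}) :
    ∀ a ∈ Ap, 0 < WG.unif {r : ℝ | mB a r h = h.1 a} :=
  statement12_general pl Ifld hP Ap ℓW hℓWprob hℓW hT ν hν m hm mB hmB hm' h heq hpos
end

section
/- Suppose player p satisfies perfect recall with the p-configuration-ordering φ, and let m^p = (m^p_a)_{a∈A^p} be an A-mixed strategy of player p. Then for every ordering κ ∈ Σ^p, the map (w^p, h) ↦ (m^p_a(w^p, h))_{a∈range(κ)}, from 𝕎^p × H_κ^φ to ∏_{a∈range(κ)} U_a, is measurable with respect to the σ-field 𝒲^p ⊗ (H_κ^φ ∩ 𝓘_{last(κ)}), where H_κ^φ ∩ 𝓘_{last(κ)} denotes the trace of 𝓘_{last(κ)} on H_κ^φ. -/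
open MeasureTheory

theorem measurable_subtype_val_of_measurableSet_inter {X : Type*} {E : Set X}
    {m m' : MeasurableSpace X} (h : ∀ s, MeasurableSet[m] s → MeasurableSet[m'] (E ∩ s)) :
    @Measurable E X (m'.comap Subtype.val) m Subtype.val := fun s hs =>
  ⟨E ∩ s, h s hs, by ext x; simp⟩

namespace WG

variable {A Ω : Type*} {U : A → Type*} [∀ a, MeasurableSpace (U a)]
  {Ifld : A → MeasurableSpace (Config U Ω)} {Ap : Finset A} {φ : Config U Ω → List A}

theorem PerfectRecall.measurable_val_ordEvent (hPR : PerfectRecall Ifld Ap φ)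
    {κ₁ : List A} {aL : A} (hκnd : (κ₁ ++ [aL]).Nodup) (hκmem : ∀ b ∈ κ₁ ++ [aL], b ∈ Ap)
    {b : A} (hb : b ∈ κ₁ ++ [aL]) :
    @Measurable (ordEvent φ (κ₁ ++ [aL])) _ ((Ifld aL).comap Subtype.val) (Ifld b)
      Subtype.val := by
  rcases List.mem_append.mp hb with hb | hb
  · -- the information field of `b` is part of its choice field, to which perfect recall applies
    refine measurable_subtype_val_of_measurableSet_inter fun s hs => hPR κ₁ aL hκnd hκmem s ?_
    exact (le_sup_right.trans
      (le_iSup₂ (f := fun c (_ : c ∈ κ₁) => actionCyl (U := U) (Ω := Ω) c ⊔ Ifld c) b hb)) s hs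
  · obtain rfl : b = aL := List.mem_singleton.mp hb
    exact comap_measurable _

end WG

theorem statement15_general
    {A Ω : Type*} {U : A → Type*} [∀ a, MeasurableSpace (U a)]
    (Ifld : A → MeasurableSpace (WG.Config U Ω))
    (Ap : Finset A)
    (φ : WG.Config U Ω → List A)
    (hPR : WG.PerfectRecall Ifld Ap φ)
    (m : ∀ a : A, (A → ℝ) × WG.Config U Ω → U a)
    (hm : ∀ a ∈ Ap,
      @Measurable _ _ ((WG.coordField (↑Ap : Set A)).prod (Ifld a)) _ (m a))
    (κ₁ : List A) (aL : A)
    (hκnd : (κ₁ ++ [aL]).Nodup) (hκmem : ∀ b ∈ κ₁ ++ [aL], b ∈ Ap) :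
    @Measurable ((A → ℝ) × ↥(WG.ordEvent φ (κ₁ ++ [aL]))) (WG.SubProd U (κ₁ ++ [aL]))
      ((WG.coordField (↑Ap : Set A)).prod (MeasurableSpace.comap Subtype.val (Ifld aL)))
      inferInstance
      (fun x => fun b => m b.val (x.1, x.2.val)) := by
  let _ : MeasurableSpace (A → ℝ) := WG.coordField (↑Ap : Set A)
  let _ : MeasurableSpace ↥(WG.ordEvent φ (κ₁ ++ [aL])) :=
    MeasurableSpace.comap Subtype.val (Ifld aL)
  refine measurable_pi_iff.mpr fun b => (hm b.val (hκmem _ b.2)).comp ?_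
  exact measurable_fst.prodMk ((hPR.measurable_val_ordEvent hκnd hκmem b.2).comp measurable_snd)

/-- Suppose player `p` (with finite agent set `Ap`) satisfies perfect
recall with the `p`-configuration-ordering `φ`, and let `m^p` be an A-mixed strategy of
player `p` (each `m_a`, `a ∈ Ap`, measurable w.r.t. `𝒲^p ⊗ 𝓘_a`). Then for every
ordering `κ = κ₁ ++ [aL] ∈ Σ^p`, the map `(w, h) ↦ (m_a(w, h))_{a ∈ range κ}` defined
on `𝕎^p × H_κ^φ` is measurable w.r.t. `𝒲^p ⊗ (H_κ^φ ∩ 𝓘_{last κ})` (trace σ-field). -/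
theorem statement15
    {A Ω : Type*} [MeasurableSpace Ω] {U : A → Type*} [∀ a, MeasurableSpace (U a)]
    (Ifld : A → MeasurableSpace (WG.Config U Ω))
    (hIle : ∀ a, Ifld a ≤ (inferInstance : MeasurableSpace (WG.Config U Ω)))
    (Ap : Finset A) (hApne : Ap.Nonempty)
    (φ : WG.Config U Ω → List A) (hφ : WG.ConfigOrdering Ap φ)
    (hPR : WG.PerfectRecall Ifld Ap φ)
    (m : ∀ a : A, (A → ℝ) × WG.Config U Ω → U a)
    (hm : ∀ a ∈ Ap,
      @Measurable _ _ ((WG.coordField (↑Ap : Set A)).prod (Ifld a)) _ (m a))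
    (κ₁ : List A) (aL : A)
    (hκnd : (κ₁ ++ [aL]).Nodup) (hκmem : ∀ b ∈ κ₁ ++ [aL], b ∈ Ap) :
    @Measurable ((A → ℝ) × ↥(WG.ordEvent φ (κ₁ ++ [aL]))) (WG.SubProd U (κ₁ ++ [aL]))
      ((WG.coordField (↑Ap : Set A)).prod (MeasurableSpace.comap Subtype.val (Ifld aL)))
      inferInstance
      (fun x => fun b => m b.val (x.1, x.2.val)) :=
  statement15_general Ifld Ap φ hPR m hm κ₁ aL hκnd hκmem
end
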